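/- Let n ≥ 1, σ > 0, let x_1,…,x_n ∈ ℝ^d, and let f : ℝ^d → ℝ^k and g : ℝ^d → ℝ^m be continuous with ‖f(x)‖₂ = 1 and ‖g(x)‖₂ = 1 for every x. For Δ = (Δ_1,…,Δ_n) ∈ (ℝ^d)^n let G_f(Δ), G_g(Δ) be the Gram matrices with entries ⟨f(x_i+Δ_i), f(x_j+Δ_j)⟩ and ⟨g(x_i+Δ_i), g(x_j+Δ_j)⟩ respectively, and define I(Δ) = H₂(G_g(Δ)) + H₂(G_f(Δ)) − H₂(G_g(Δ)⊙G_f(Δ)). Let μ_σ be the Gaussian measure N(0, σ²I) on (ℝ^d)^n, i.e. the n·d-fold product over all coordinates of the one-dimensional Gaussian measure with mean 0 and variance σ². Assume Δ ↦ I(Δ) and Δ ↦ ∑_{i=1}^n (‖f(x_i+Δ_i) − f(x_i)‖₂ + ‖g(x_i+Δ_i) − g(x_i)‖₂) are integrable with respect to μ_σ. Then |∫ I(Δ) dμ_σ(Δ) − I(0)| ≤ 16·∫ ∑_{i=1}^n (‖f(x_i+Δ_i) − f(x_i)‖₂ + ‖g(x_i+Δ_i) − g(x_i)‖₂) dμ_σ(Δ).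 -/

import Mathlib

open MeasureTheory ProbabilityTheory
open scoped RealInnerProductSpace

section AuxLemmas

lemma aux_log_lip {a b c : ℝ} (hc : 0 < c) (ha : c ≤ a) (hb : c ≤ b) :
    |Real.log a - Real.log b| ≤ |a - b| / c := by
  have key : ∀ u v : ℝ, c ≤ u → c ≤ v → v ≤ u →
      Real.log u - Real.log v ≤ (u - v) / c := by
    intro u v hu hv hvu
    have hv0 : 0 < v := lt_of_lt_of_le hc hv
    have hu0 : 0 < u := lt_of_lt_of_le hc hu
    have h1 := Real.log_le_sub_one_of_pos (show 0 < u / v by positivity)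
    rw [Real.log_div (ne_of_gt hu0) (ne_of_gt hv0)] at h1
    have h2 : u / v - 1 = (u - v) / v := by field_simp
    have h3 : (u - v) / v ≤ (u - v) / c :=
      div_le_div_of_nonneg_left (by linarith) hc hv
    linarith
  rcases le_total b a with h | h
  · rw [abs_of_nonneg (sub_nonneg.2 (Real.log_le_log (lt_of_lt_of_le hc hb) h)),
      abs_of_nonneg (by linarith)]
    exact key a b ha hb h
  · rw [abs_sub_comm, abs_sub_comm a b,
      abs_of_nonneg (sub_nonneg.2 (Real.log_le_log (lt_of_lt_of_le hc ha) h)),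
      abs_of_nonneg (by linarith)]
    exact key b a hb ha h

lemma aux_prod_diff (a b a' b' : ℝ) (ha : |a| ≤ 1) (hb' : |b'| ≤ 1) :
    |a * b - a' * b'| ≤ |a - a'| + |b - b'| := by
  have h : a * b - a' * b' = (a - a') * b' + a * (b - b') := by ring
  rw [h]
  refine (abs_add_le _ _).trans ?_
  rw [abs_mul, abs_mul]
  nlinarith [abs_nonneg (a - a'), abs_nonneg (b - b')]

lemma aux_sum_pair {n : ℕ} (c : Fin n → ℝ) :
    ∑ i : Fin n, ∑ j : Fin n, (c i + c j) = 2 * n * ∑ i, c i := by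
  have h : ∀ i : Fin n, ∑ j : Fin n, (c i + c j) = n * c i + ∑ j, c j := by
    intro i
    rw [Finset.sum_add_distrib, Finset.sum_const, Finset.card_univ,
      Fintype.card_fin, nsmul_eq_mul]
  rw [Finset.sum_congr rfl fun i _ => h i, Finset.sum_add_distrib,
    Finset.sum_const, Finset.card_univ, Fintype.card_fin, nsmul_eq_mul,
    ← Finset.mul_sum]
  ring

end AuxLemmas

/-- Order-2 matrix (Rényi) entropy `H₂(K) = -log(tr((n⁻¹K)²))`. -/
noncomputable def H2 {n : ℕ} (K : Matrix (Fin n) (Fin n) ℝ) : ℝ :=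
  -Real.log (Matrix.trace (((n : ℝ)⁻¹ • K) ^ 2))

/-- Gram matrix of a family of vectors. -/
noncomputable def gram {n k : ℕ} (z : Fin n → EuclideanSpace ℝ (Fin k)) :
    Matrix (Fin n) (Fin n) ℝ :=
  Matrix.of fun i j => ⟪z i, z j⟫

section H2Lemmas

lemma aux_H2_eq {n : ℕ} (K : Matrix (Fin n) (Fin n) ℝ) :
    H2 K = -Real.log (∑ i, ∑ j, ((n:ℝ)⁻¹ * K i j) * ((n:ℝ)⁻¹ * K j i)) := by
  unfold H2
  congr 2
  simp [Matrix.trace, Matrix.diag, pow_two, Matrix.mul_apply, Matrix.smul_apply,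
    smul_eq_mul]

/-- Lipschitz-style bound for the order-2 entropy on symmetric matrices with
unit diagonal and entries bounded by `1`. -/
lemma aux_H2_lip {n : ℕ} (hn : 1 ≤ n) (K K' : Matrix (Fin n) (Fin n) ℝ)
    (hdK : ∀ i, K i i = 1) (hdK' : ∀ i, K' i i = 1)
    (hbK : ∀ i j, |K i j| ≤ 1) (hbK' : ∀ i j, |K' i j| ≤ 1)
    (hsK : ∀ i j, K j i = K i j) (hsK' : ∀ i j, K' j i = K' i j) :
    |H2 K - H2 K'| ≤ (2 / n) * ∑ i, ∑ j, |K i j - K' i j| := by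
  have hn0 : (0:ℝ) < n := by exact_mod_cast Nat.lt_of_lt_of_le Nat.zero_lt_one hn
  set T : Matrix (Fin n) (Fin n) ℝ → ℝ :=
    fun A => ∑ i, ∑ j, ((n:ℝ)⁻¹ * A i j) * ((n:ℝ)⁻¹ * A j i) with hT
  have hTlow : ∀ A : Matrix (Fin n) (Fin n) ℝ, (∀ i, A i i = 1) →
      (∀ i j, A j i = A i j) → (n:ℝ)⁻¹ ≤ T A := by
    intro A hd hs
    have hrow : ∀ i : Fin n, ((n:ℝ)⁻¹)^2 ≤ ∑ j, ((n:ℝ)⁻¹ * A i j) * ((n:ℝ)⁻¹ * A j i) := by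
      intro i
      have h1 : ((n:ℝ)⁻¹ * A i i) * ((n:ℝ)⁻¹ * A i i) ≤
          ∑ j, ((n:ℝ)⁻¹ * A i j) * ((n:ℝ)⁻¹ * A j i) := by
        refine Finset.single_le_sum (f := fun j => ((n:ℝ)⁻¹ * A i j) * ((n:ℝ)⁻¹ * A j i))
          (fun j _ => ?_) (Finset.mem_univ i)
        show 0 ≤ ((n:ℝ)⁻¹ * A i j) * ((n:ℝ)⁻¹ * A j i)
        rw [hs i j]; exact mul_self_nonneg _
      rw [hd i] at h1
      calc ((n:ℝ)⁻¹)^2 = ((n:ℝ)⁻¹ * 1) * ((n:ℝ)⁻¹ * 1) := by ring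
        _ ≤ _ := h1
    calc (n:ℝ)⁻¹ = ∑ _i : Fin n, ((n:ℝ)⁻¹)^2 := by
          rw [Finset.sum_const, Finset.card_univ, Fintype.card_fin, nsmul_eq_mul]
          field_simp
      _ ≤ T A := Finset.sum_le_sum (fun i _ => hrow i)
  have hTdiff : |T K - T K'| ≤ (n:ℝ)⁻¹^2 * (2 * ∑ i, ∑ j, |K i j - K' i j|) := by
    have h1 : T K - T K' = ∑ i, ∑ j,
        ((n:ℝ)⁻¹^2 * (K i j * K j i - K' i j * K' j i)) := by
      simp only [hT, ← Finset.sum_sub_distrib]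
      congr 1; ext i; congr 1; ext j; ring
    rw [h1]
    calc |∑ i, ∑ j, ((n:ℝ)⁻¹^2 * (K i j * K j i - K' i j * K' j i))|
        ≤ ∑ i, ∑ j, |((n:ℝ)⁻¹^2 * (K i j * K j i - K' i j * K' j i))| := by
          refine (Finset.abs_sum_le_sum_abs _ _).trans ?_
          exact Finset.sum_le_sum fun i _ => Finset.abs_sum_le_sum_abs _ _
      _ ≤ ∑ i, ∑ j, (n:ℝ)⁻¹^2 * (|K i j - K' i j| + |K j i - K' j i|) := by
          refine Finset.sum_le_sum fun i _ => Finset.sum_le_sum fun j _ => ?_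
          rw [abs_mul, abs_of_nonneg (by positivity : (0:ℝ) ≤ (n:ℝ)⁻¹^2)]
          exact mul_le_mul_of_nonneg_left
            (aux_prod_diff _ _ _ _ (hbK i j) (hbK' j i)) (by positivity)
      _ = (n:ℝ)⁻¹^2 * (2 * ∑ i, ∑ j, |K i j - K' i j|) := by
          simp only [← Finset.mul_sum, Finset.sum_add_distrib]
          rw [Finset.sum_comm (f := fun i j => |K j i - K' j i|)]
          ring
  rw [aux_H2_eq, aux_H2_eq]
  show |(-Real.log (T K)) - (-Real.log (T K'))| ≤ _
  have h2 : |(-Real.log (T K)) - (-Real.log (T K'))| =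
      |Real.log (T K) - Real.log (T K')| := by
    rw [← abs_neg]; ring_nf
  rw [h2]
  have h3 := aux_log_lip (show (0:ℝ) < (n:ℝ)⁻¹ by positivity)
    (hTlow K hdK hsK) (hTlow K' hdK' hsK')
  calc |Real.log (T K) - Real.log (T K')| ≤ |T K - T K'| / (n:ℝ)⁻¹ := h3
    _ = (n:ℝ) * |T K - T K'| := by field_simp
    _ ≤ (n:ℝ) * ((n:ℝ)⁻¹^2 * (2 * ∑ i, ∑ j, |K i j - K' i j|)) :=
        mul_le_mul_of_nonneg_left hTdiff (le_of_lt hn0)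
    _ = (2 / n) * ∑ i, ∑ j, |K i j - K' i j| := by field_simp

end H2Lemmas

section GramLemmas

lemma aux_gram_diag {n k : ℕ} (z : Fin n → EuclideanSpace ℝ (Fin k))
    (hz : ∀ i, ‖z i‖ = 1) (i : Fin n) : gram z i i = 1 := by
  have h : ⟪z i, z i⟫ = 1 := by
    rw [real_inner_self_eq_norm_sq, hz]; norm_num
  simpa [gram] using h

lemma aux_gram_bound {n k : ℕ} (z : Fin n → EuclideanSpace ℝ (Fin k))
    (hz : ∀ i, ‖z i‖ = 1) (i j : Fin n) : |gram z i j| ≤ 1 := by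
  have := abs_real_inner_le_norm (z i) (z j)
  simpa [gram, hz] using this

lemma aux_gram_symm {n k : ℕ} (z : Fin n → EuclideanSpace ℝ (Fin k))
    (i j : Fin n) : gram z j i = gram z i j := by
  have h : ⟪z j, z i⟫ = ⟪z i, z j⟫ := real_inner_comm _ _
  simpa [gram] using h

lemma aux_inner_diff {k : ℕ} (u u' v v' : EuclideanSpace ℝ (Fin k))
    (hu : ‖u‖ = 1) (hv' : ‖v'‖ = 1) :
    |⟪u, v⟫ - ⟪u', v'⟫| ≤ ‖u - u'‖ + ‖v - v'‖ := by
  have h : ⟪u, v⟫ - ⟪u', v'⟫ = ⟪u, v - v'⟫ + ⟪u - u', v'⟫ := by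
    rw [inner_sub_right, inner_sub_left]; ring
  rw [h]
  refine (abs_add_le _ _).trans ?_
  have h1 := abs_real_inner_le_norm u (v - v')
  have h2 := abs_real_inner_le_norm (u - u') v'
  rw [hu] at h1; rw [hv'] at h2
  calc |⟪u, v - v'⟫| + |⟪u - u', v'⟫| ≤ 1 * ‖v - v'‖ + ‖u - u'‖ * 1 := add_le_add h1 h2
    _ = ‖u - u'‖ + ‖v - v'‖ := by ring

end GramLemmas

/-- The Gaussian measure `N(0, σ²I)` on `(ℝ^d)^n`, the `n·d`-fold product over
all coordinates of the one-dimensional Gaussian with mean `0`, variance `σ²`. -/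
noncomputable def gaussPi (n d : ℕ) (σ : ℝ) :
    Measure (Fin n → EuclideanSpace ℝ (Fin d)) :=
  Measure.pi fun _ : Fin n =>
    (Measure.map (MeasurableEquiv.toLp 2 (Fin d → ℝ))
      (Measure.pi fun _ : Fin d => gaussianReal 0 ⟨σ ^ 2, sq_nonneg σ⟩) :
      Measure (EuclideanSpace ℝ (Fin d)))

/-- the mutual-information difference `|∫ I dμ_σ - I(0)|` is
bounded by `16 ∫ ∑ᵢ (‖f(xᵢ+Δᵢ) - f(xᵢ)‖ + ‖g(xᵢ+Δᵢ) - g(xᵢ)‖) dμ_σ`, where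
`I(Δ) = H₂(G_g(Δ)) + H₂(G_f(Δ)) - H₂(G_g(Δ)⊙G_f(Δ))` is the order-2 matrix
mutual information of the Gram matrices of the unit-norm representations. -/
theorem statement13 {n d k m : ℕ} (hn : 1 ≤ n) (σ : ℝ) (hσ : 0 < σ)
    (x : Fin n → EuclideanSpace ℝ (Fin d))
    (f : EuclideanSpace ℝ (Fin d) → EuclideanSpace ℝ (Fin k))
    (g : EuclideanSpace ℝ (Fin d) → EuclideanSpace ℝ (Fin m))
    (hf : Continuous f) (hg : Continuous g)
    (hfnorm : ∀ v, ‖f v‖ = 1) (hgnorm : ∀ v, ‖g v‖ = 1)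
    (I : (Fin n → EuclideanSpace ℝ (Fin d)) → ℝ)
    (hI : ∀ Δ, I Δ =
      H2 (gram (fun i => g (x i + Δ i))) + H2 (gram (fun i => f (x i + Δ i))) -
        H2 (Matrix.hadamard (gram (fun i => g (x i + Δ i)))
          (gram (fun i => f (x i + Δ i)))))
    (hint1 : Integrable I (gaussPi n d σ))
    (hint2 : Integrable
      (fun Δ => ∑ i, (‖f (x i + Δ i) - f (x i)‖ + ‖g (x i + Δ i) - g (x i)‖))
      (gaussPi n d σ)) :
    |(∫ Δ, I Δ ∂(gaussPi n d σ)) - I 0| ≤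
      16 * ∫ Δ, ∑ i, (‖f (x i + Δ i) - f (x i)‖ + ‖g (x i + Δ i) - g (x i)‖)
        ∂(gaussPi n d σ) := by
  classical
  have hn0 : (0:ℝ) < n := by exact_mod_cast Nat.lt_of_lt_of_le Nat.zero_lt_one hn
  haveI h1 : IsProbabilityMeasure
      (Measure.map (MeasurableEquiv.toLp 2 (Fin d → ℝ))
        (Measure.pi fun _ : Fin d => gaussianReal 0 ⟨σ ^ 2, sq_nonneg σ⟩) :
        Measure (EuclideanSpace ℝ (Fin d))) := by
    have h : IsProbabilityMeasure
        (Measure.pi fun _ : Fin d => gaussianReal 0 ⟨σ ^ 2, sq_nonneg σ⟩ :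
          Measure (Fin d → ℝ)) :=
        @Measure.pi.instIsProbabilityMeasure _ _ _ _ _ fun _ => instIsProbabilityMeasureGaussianReal _ _
    exact Measure.isProbabilityMeasure_map (MeasurableEquiv.measurable _).aemeasurable
  haveI hprob : IsProbabilityMeasure (gaussPi n d σ) := by
    unfold gaussPi; infer_instance
  -- pointwise bound
  have key : ∀ Δ, |I Δ - I 0| ≤
      8 * ∑ i, (‖f (x i + Δ i) - f (x i)‖ + ‖g (x i + Δ i) - g (x i)‖) := by
    intro Δ
    set a : Fin n → ℝ := fun i => ‖f (x i + Δ i) - f (x i)‖ with ha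
    set b : Fin n → ℝ := fun i => ‖g (x i + Δ i) - g (x i)‖ with hb
    set Kg := gram (fun i => g (x i + Δ i)) with hKg
    set Kf := gram (fun i => f (x i + Δ i)) with hKf
    set Kg0 := gram (fun i => g (x i)) with hKg0
    set Kf0 := gram (fun i => f (x i)) with hKf0
    have hI0 : I 0 = H2 Kg0 + H2 Kf0 - H2 (Matrix.hadamard Kg0 Kf0) := by
      rw [hI 0]
      simp only [Pi.zero_apply, add_zero, hKg0, hKf0]
    -- unit norms
    have hgz : ∀ i : Fin n, ‖(fun i => g (x i + Δ i)) i‖ = 1 := fun i => hgnorm _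
    have hfz : ∀ i : Fin n, ‖(fun i => f (x i + Δ i)) i‖ = 1 := fun i => hfnorm _
    have hgz0 : ∀ i : Fin n, ‖(fun i => g (x i)) i‖ = 1 := fun i => hgnorm _
    have hfz0 : ∀ i : Fin n, ‖(fun i => f (x i)) i‖ = 1 := fun i => hfnorm _
    -- entrywise differences
    have hKgd : ∀ i, Kg i i = 1 := fun i => aux_gram_diag _ hgz i
    have hKfd : ∀ i, Kf i i = 1 := fun i => aux_gram_diag _ hfz i
    have hKg0d : ∀ i, Kg0 i i = 1 := fun i => aux_gram_diag _ hgz0 i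
    have hKf0d : ∀ i, Kf0 i i = 1 := fun i => aux_gram_diag _ hfz0 i
    have hKgs : ∀ i j, Kg j i = Kg i j := fun i j => aux_gram_symm _ i j
    have hKfs : ∀ i j, Kf j i = Kf i j := fun i j => aux_gram_symm _ i j
    have hKg0s : ∀ i j, Kg0 j i = Kg0 i j := fun i j => aux_gram_symm _ i j
    have hKf0s : ∀ i j, Kf0 j i = Kf0 i j := fun i j => aux_gram_symm _ i j
    have hdg : ∀ i j, |Kg i j - Kg0 i j| ≤ b i + b j := by
      intro i j
      exact aux_inner_diff _ _ _ _ (hgnorm _) (hgnorm _)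
    have hdf : ∀ i j, |Kf i j - Kf0 i j| ≤ a i + a j := by
      intro i j
      exact aux_inner_diff _ _ _ _ (hfnorm _) (hfnorm _)
    -- entropy bounds for the three pairs
    have hg_bound : |H2 Kg - H2 Kg0| ≤ 4 * ∑ i, b i := by
      have h1 := aux_H2_lip hn Kg Kg0 (aux_gram_diag _ hgz) (aux_gram_diag _ hgz0)
        (aux_gram_bound _ hgz) (aux_gram_bound _ hgz0)
        (aux_gram_symm _) (aux_gram_symm _)
      have h2 : ∑ i, ∑ j, |Kg i j - Kg0 i j| ≤ 2 * n * ∑ i, b i := by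
        rw [← aux_sum_pair b]
        exact Finset.sum_le_sum fun i _ => Finset.sum_le_sum fun j _ => hdg i j
      calc |H2 Kg - H2 Kg0| ≤ (2 / n) * ∑ i, ∑ j, |Kg i j - Kg0 i j| := h1
        _ ≤ (2 / n) * (2 * n * ∑ i, b i) :=
            mul_le_mul_of_nonneg_left h2 (by positivity)
        _ = 4 * ∑ i, b i := by field_simp; ring
    have hf_bound : |H2 Kf - H2 Kf0| ≤ 4 * ∑ i, a i := by
      have h1 := aux_H2_lip hn Kf Kf0 (aux_gram_diag _ hfz) (aux_gram_diag _ hfz0)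
        (aux_gram_bound _ hfz) (aux_gram_bound _ hfz0)
        (aux_gram_symm _) (aux_gram_symm _)
      have h2 : ∑ i, ∑ j, |Kf i j - Kf0 i j| ≤ 2 * n * ∑ i, a i := by
        rw [← aux_sum_pair a]
        exact Finset.sum_le_sum fun i _ => Finset.sum_le_sum fun j _ => hdf i j
      calc |H2 Kf - H2 Kf0| ≤ (2 / n) * ∑ i, ∑ j, |Kf i j - Kf0 i j| := h1
        _ ≤ (2 / n) * (2 * n * ∑ i, a i) :=
            mul_le_mul_of_nonneg_left h2 (by positivity)
        _ = 4 * ∑ i, a i := by field_simp; ring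
    have hH_bound : |H2 (Matrix.hadamard Kg Kf) - H2 (Matrix.hadamard Kg0 Kf0)| ≤
        4 * ∑ i, (a i + b i) := by
      have hdiagH : ∀ i, Matrix.hadamard Kg Kf i i = 1 := by
        intro i
        rw [Matrix.hadamard_apply, hKgd i, hKfd i]; norm_num
      have hdiagH0 : ∀ i, Matrix.hadamard Kg0 Kf0 i i = 1 := by
        intro i
        rw [Matrix.hadamard_apply, hKg0d i, hKf0d i]; norm_num
      have hbH : ∀ i j, |Matrix.hadamard Kg Kf i j| ≤ 1 := by
        intro i j
        rw [Matrix.hadamard_apply, abs_mul]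
        exact mul_le_one₀ (aux_gram_bound _ hgz i j) (abs_nonneg _) (aux_gram_bound _ hfz i j)
      have hbH0 : ∀ i j, |Matrix.hadamard Kg0 Kf0 i j| ≤ 1 := by
        intro i j
        rw [Matrix.hadamard_apply, abs_mul]
        exact mul_le_one₀ (aux_gram_bound _ hgz0 i j) (abs_nonneg _) (aux_gram_bound _ hfz0 i j)
      have hsH : ∀ i j, Matrix.hadamard Kg Kf j i = Matrix.hadamard Kg Kf i j := by
        intro i j
        rw [Matrix.hadamard_apply, Matrix.hadamard_apply, hKgs i j, hKfs i j]
      have hsH0 : ∀ i j, Matrix.hadamard Kg0 Kf0 j i = Matrix.hadamard Kg0 Kf0 i j := by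
        intro i j
        rw [Matrix.hadamard_apply, Matrix.hadamard_apply, hKg0s i j, hKf0s i j]
      have h1 := aux_H2_lip hn (Matrix.hadamard Kg Kf) (Matrix.hadamard Kg0 Kf0)
        hdiagH hdiagH0 hbH hbH0 hsH hsH0
      have h2 : ∑ i, ∑ j, |Matrix.hadamard Kg Kf i j - Matrix.hadamard Kg0 Kf0 i j| ≤
          2 * n * ∑ i, (a i + b i) := by
        rw [← aux_sum_pair (fun i => a i + b i)]
        refine Finset.sum_le_sum fun i _ => Finset.sum_le_sum fun j _ => ?_
        rw [Matrix.hadamard_apply, Matrix.hadamard_apply]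
        calc |Kg i j * Kf i j - Kg0 i j * Kf0 i j|
            ≤ |Kg i j - Kg0 i j| + |Kf i j - Kf0 i j| :=
              aux_prod_diff _ _ _ _ (aux_gram_bound _ hgz i j) (aux_gram_bound _ hfz0 i j)
          _ ≤ (b i + b j) + (a i + a j) := add_le_add (hdg i j) (hdf i j)
          _ = (a i + b i) + (a j + b j) := by ring
      calc |H2 (Matrix.hadamard Kg Kf) - H2 (Matrix.hadamard Kg0 Kf0)|
          ≤ (2 / n) * ∑ i, ∑ j, |Matrix.hadamard Kg Kf i j - Matrix.hadamard Kg0 Kf0 i j| := h1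
        _ ≤ (2 / n) * (2 * n * ∑ i, (a i + b i)) :=
            mul_le_mul_of_nonneg_left h2 (by positivity)
        _ = 4 * ∑ i, (a i + b i) := by field_simp; ring
    -- combine
    have hsplit : I Δ - I 0 = (H2 Kg - H2 Kg0) + (H2 Kf - H2 Kf0) -
        (H2 (Matrix.hadamard Kg Kf) - H2 (Matrix.hadamard Kg0 Kf0)) := by
      rw [hI Δ, hI0, hKg, hKf]; ring
    have habs : |I Δ - I 0| ≤ |H2 Kg - H2 Kg0| + |H2 Kf - H2 Kf0| +
        |H2 (Matrix.hadamard Kg Kf) - H2 (Matrix.hadamard Kg0 Kf0)| := by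
      rw [hsplit, sub_eq_add_neg]
      refine (abs_add_le _ _).trans ?_
      rw [abs_neg]
      exact add_le_add_left (abs_add_le _ _) _
    have hsum : ∑ i, (a i + b i) =
        ∑ i, (‖f (x i + Δ i) - f (x i)‖ + ‖g (x i + Δ i) - g (x i)‖) := rfl
    have hsplit2 : ∑ i, (a i + b i) = (∑ i, a i) + ∑ i, b i :=
      Finset.sum_add_distrib
    calc |I Δ - I 0| ≤ |H2 Kg - H2 Kg0| + |H2 Kf - H2 Kf0| +
        |H2 (Matrix.hadamard Kg Kf) - H2 (Matrix.hadamard Kg0 Kf0)| := habs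
      _ ≤ 4 * ∑ i, b i + 4 * ∑ i, a i + 4 * ∑ i, (a i + b i) :=
          add_le_add (add_le_add hg_bound hf_bound) hH_bound
      _ = 8 * ∑ i, (a i + b i) := by rw [hsplit2]; ring
      _ = 8 * ∑ i, (‖f (x i + Δ i) - f (x i)‖ + ‖g (x i + Δ i) - g (x i)‖) := by
          rw [hsum]
  -- integrate the pointwise bound
  have hφ0 : (0:ℝ) ≤ ∫ Δ, ∑ i, (‖f (x i + Δ i) - f (x i)‖ + ‖g (x i + Δ i) - g (x i)‖)
      ∂(gaussPi n d σ) :=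
    integral_nonneg fun Δ => Finset.sum_nonneg fun i _ => by positivity
  have h1 : (∫ Δ, I Δ ∂(gaussPi n d σ)) - I 0 = ∫ Δ, (I Δ - I 0) ∂(gaussPi n d σ) := by
    rw [integral_sub hint1 (integrable_const _), integral_const, probReal_univ]
    simp
  rw [h1]
  calc |∫ Δ, (I Δ - I 0) ∂(gaussPi n d σ)|
      ≤ ∫ Δ, |I Δ - I 0| ∂(gaussPi n d σ) := by
        have h := norm_integral_le_integral_norm (μ := gaussPi n d σ)
          (f := fun Δ => I Δ - I 0)
        simpa [Real.norm_eq_abs] using h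
    _ ≤ ∫ Δ, 8 * ∑ i, (‖f (x i + Δ i) - f (x i)‖ + ‖g (x i + Δ i) - g (x i)‖)
        ∂(gaussPi n d σ) :=
        integral_mono (hint1.sub (integrable_const _)).abs (hint2.const_mul 8) key
    _ = 8 * ∫ Δ, ∑ i, (‖f (x i + Δ i) - f (x i)‖ + ‖g (x i + Δ i) - g (x i)‖)
        ∂(gaussPi n d σ) := integral_const_mul _ _
    _ ≤ 16 * ∫ Δ, ∑ i, (‖f (x i + Δ i) - f (x i)‖ + ‖g (x i + Δ i) - g (x i)‖)
        ∂(gaussPi n d σ) := by linarith
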